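/- Let (G,σ) be a connected signed graph. If (G,σ) admits a Z₂-flow f₁ such that supp(f₁) contains an even number of odd components, then (G,σ) admits a 3-flow f₂ such that supp(f₁) = E_{f₂=±1} and supp(f₂) − supp(f₁) induces an acyclic subgraph. -/

import Mathlib

/-- A signed graph: a multigraph (loops and multiple edges allowed) with vertex type `V`
and edge type `E`, where edge `e` joins `fst e` and `snd e`, together with a signature
`sign : E → ℤ` taking values in `{1, -1}`. -/
structure SignedGraph (V E : Type) where
  fst : E → V
  snd : E → V
  sign : E → ℤ
  sign_unit : ∀ e, sign e = 1 ∨ sign e = -1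

namespace SignedGraph

variable {V E : Type}

/-- A circuit in a signed graph: pairwise distinct vertices `vert 0, …, vert (n-1)` and
pairwise distinct edges `edge 0, …, edge (n-1)` with `edge i` joining `vert i` and
`vert ((i+1) % n)`.  (`n = 1` gives a loop, `n = 2` a digon.) -/
structure Circuit (G : SignedGraph V E) where
  n : ℕ
  n_pos : 0 < n
  vert : ℕ → V
  edge : ℕ → E
  vert_inj : ∀ i < n, ∀ j < n, vert i = vert j → i = j
  edge_inj : ∀ i < n, ∀ j < n, edge i = edge j → i = j
  ends : ∀ i < n,
    (G.fst (edge i) = vert i ∧ G.snd (edge i) = vert ((i + 1) % n)) ∨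
    (G.snd (edge i) = vert i ∧ G.fst (edge i) = vert ((i + 1) % n))

namespace Circuit

variable {G : SignedGraph V E}

/-- Edge set of a circuit. -/
def edgeSet (c : Circuit G) : Set E := {e | ∃ i < c.n, c.edge i = e}

/-- Vertex set of a circuit. -/
def vertSet (c : Circuit G) : Set V := {v | ∃ i < c.n, c.vert i = v}

/-- The number of negative edges of a circuit. -/
noncomputable def negCount (c : Circuit G) : ℕ :=
  {i | i < c.n ∧ G.sign (c.edge i) = -1}.ncard

/-- A circuit is balanced if it contains an even number of negative edges. -/
def IsBalanced (c : Circuit G) : Prop := Even c.negCount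

end Circuit

variable (G : SignedGraph V E)

/-- The endpoint of a half edge `(e, b)`: each edge `e` is regarded as the two half
edges `(e, true)` (at `fst e`) and `(e, false)` (at `snd e`). -/
def ep (h : E × Bool) : V := if h.2 then G.fst h.1 else G.snd h.1

/-- An orientation assigns `±1` to each half edge so that the two half edges of an
edge `e` multiply to `- sign e`. -/
def IsOrientation (τ : E × Bool → ℤ) : Prop :=
  (∀ h, τ h = 1 ∨ τ h = -1) ∧ ∀ e : E, τ (e, true) * τ (e, false) = - G.sign e

/-- The boundary of `(τ, f)` at a vertex `v`: the sum of `τ h * f e` over all half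
edges `h` of edges `e` incident with `v`. -/
noncomputable def boundary (τ : E × Bool → ℤ) (f : E → ℤ) (v : V) : ℤ :=
  ∑ᶠ h ∈ {h : E × Bool | G.ep h = v}, τ h * f h.1

/-- `(τ, f)` is a `k`-flow: `τ` is an orientation, `|f e| ≤ k - 1` everywhere, and the
boundary vanishes at every vertex. -/
def IsFlow (k : ℤ) (τ : E × Bool → ℤ) (f : E → ℤ) : Prop :=
  G.IsOrientation τ ∧ (∀ e, |f e| ≤ k - 1) ∧ ∀ v, G.boundary τ f v = 0

/-- `(τ, f)` is a `ℤ_k`-flow: `τ` is an orientation, `|f e| ≤ k - 1` everywhere, and the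
boundary is divisible by `k` at every vertex. -/
def IsZFlow (k : ℤ) (τ : E × Bool → ℤ) (f : E → ℤ) : Prop :=
  G.IsOrientation τ ∧ (∀ e, |f e| ≤ k - 1) ∧ ∀ v, k ∣ G.boundary τ f v

/-- `f` is nowhere-zero. -/
def NowhereZero (_G : SignedGraph V E) (f : E → ℤ) : Prop := ∀ e, f e ≠ 0

/-- `G` admits a nowhere-zero `k`-flow. -/
def HasNZFlow (k : ℤ) : Prop := ∃ τ f, G.IsFlow k τ f ∧ G.NowhereZero f

/-- `G` is flow-admissible: it admits a nowhere-zero `k`-flow for some integer `k ≥ 2`. -/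
def FlowAdmissible : Prop := ∃ k : ℤ, 2 ≤ k ∧ G.HasNZFlow k

/-- The support of `f`. -/
def supp (_G : SignedGraph V E) (f : E → ℤ) : Set E := {e | f e ≠ 0}

/-- The degree of a vertex: the number of half edges incident with it (a loop counts
twice). -/
noncomputable def degree (v : V) : ℕ := {h : E × Bool | G.ep h = v}.ncard

/-- The degree of `v` in the subgraph with edge set `A`. -/
noncomputable def degIn (A : Set E) (v : V) : ℕ :=
  {h : E × Bool | h.1 ∈ A ∧ G.ep h = v}.ncard

/-- `G` is cubic: every vertex has degree 3. -/
def Cubic : Prop := ∀ v, G.degree v = 3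

/-- Adjacency via an edge belonging to `A`. -/
def adjIn (A : Set E) (u v : V) : Prop :=
  ∃ e ∈ A, (G.fst e = u ∧ G.snd e = v) ∨ (G.fst e = v ∧ G.snd e = u)

/-- Reachability inside the subgraph with edge set `A`. -/
def reachIn (A : Set E) : V → V → Prop := Relation.ReflTransGen (G.adjIn A)

/-- `G` is connected. -/
def Connected : Prop := ∀ u v, G.reachIn Set.univ u v

/-- `e` is a bridge (cut edge) of the underlying graph. -/
def IsBridge (e : E) : Prop := ¬ G.reachIn {e' | e' ≠ e} (G.fst e) (G.snd e)

/-- `G` is bridgeless. -/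
def Bridgeless : Prop := ∀ e, ¬ G.IsBridge e

/-- The edge set `A` contains no circuit. -/
def Acyclic (A : Set E) : Prop := ∀ c : Circuit G, ¬ c.edgeSet ⊆ A

/-- Every circuit with all edges in `A` is balanced. -/
def BalancedOn (A : Set E) : Prop := ∀ c : Circuit G, c.edgeSet ⊆ A → c.IsBalanced

/-- `G` is balanced: it contains no unbalanced circuit. -/
def Balanced : Prop := ∀ c : Circuit G, c.IsBalanced

/-- The number of negative edges in `A`. -/
noncomputable def negEdgeCount (A : Set E) : ℕ := {e ∈ A | G.sign e = -1}.ncard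

/-- The edges of the connected component of `v` in the subgraph with edge set `A`. -/
def compEdges (A : Set E) (v : V) : Set E := {e ∈ A | G.reachIn A v (G.fst e)}

/-- The number of (nonempty) components of the subgraph with edge set `A` containing an
odd number of negative edges. -/
noncomputable def oddCompCount (A : Set E) : ℕ :=
  {S : Set E | (∃ v, S = G.compEdges A v) ∧ S.Nonempty ∧ Odd (G.negEdgeCount S)}.ncard

/-- The number of unbalanced circuits (counted by their edge sets) all of whose edges
lie in `A`. -/
noncomputable def unbalCircCount (A : Set E) : ℕ :=
  {S : Set E | ∃ c : Circuit G, c.edgeSet = S ∧ S ⊆ A ∧ ¬ c.IsBalanced}.ncard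

/-- Vertices incident with an edge of `A`. -/
def vertsIn (A : Set E) : Set V := {v | ∃ e ∈ A, G.fst e = v ∨ G.snd e = v}

/-- A proper 3-edge-coloring: edges sharing an endvertex receive different colors. -/
def IsProper3EdgeColoring (col : E → Fin 3) : Prop :=
  ∀ e e', e ≠ e' →
    (G.fst e = G.fst e' ∨ G.fst e = G.snd e' ∨ G.snd e = G.fst e' ∨ G.snd e = G.snd e') →
    col e ≠ col e'

/-- `G` is 3-edge-colorable. -/
def ThreeEdgeColorable : Prop := ∃ col : E → Fin 3, G.IsProper3EdgeColoring col

/-- `G` is hamiltonian: it contains a circuit through all vertices. -/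
def Hamiltonian : Prop := ∃ c : Circuit G, ∀ v : V, v ∈ c.vertSet

end SignedGraph

/-!
The support `A` of `f₁` has even degree at every vertex, and, negative edges being counted
component by component, an even number of negative edges. Add an acyclic set `J` of edges outside
`A` so that `A ∪ J` connects `G`, and double every edge of `J`. The resulting multigraph is
connected with all degrees even, so it has a closed traversal using every edge once
(Hierholzer), and the product of the signs along it is `(-1) ^ #(negative edges of A) = 1`.
Sending `±1` along this traversal, the value flips exactly at negative edges and returns to its
start unchanged, so it is a flow; its value is `±1` on `A` and `0` or `±2` on `J`.
-/

theorem Relation.ReflTransGen.exists_rel_of_mem_of_notMem {α : Type*} {r : α → α → Prop}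
    {S : Set α} {a b : α} (h : Relation.ReflTransGen r a b) (ha : a ∈ S) (hb : b ∉ S) :
    ∃ u v, r u v ∧ u ∈ S ∧ v ∉ S := by
  induction h with
  | refl => exact absurd ha hb
  | @tail c d _ hcd ih =>
    by_cases hc : c ∈ S
    · exact ⟨c, d, hcd, hc, hb⟩
    · exact ih hc

open scoped Finset Classical

namespace SignedGraph

variable {V E : Type} {G : SignedGraph V E}

theorem adjIn_comm {A : Set E} {u v : V} : G.adjIn A u v ↔ G.adjIn A v u := by
  simp only [adjIn, or_comm]

theorem reachIn_symm {A : Set E} {u v : V} (h : G.reachIn A u v) : G.reachIn A v u := by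
  induction h with
  | refl => exact .refl
  | tail _ hab ih => exact ih.head (adjIn_comm.mp hab)

theorem reachIn_mono {A B : Set E} (hAB : A ⊆ B) {u v : V} (h : G.reachIn A u v) :
    G.reachIn B u v :=
  Relation.ReflTransGen.mono (fun _ _ ⟨e, he, hends⟩ => ⟨e, hAB he, hends⟩) _ _ h

namespace Circuit

theorem edge_zero_mem (c : Circuit G) : c.edge 0 ∈ c.edgeSet := ⟨0, c.n_pos, rfl⟩

theorem reachIn_diff_edge_zero (c : Circuit G) :
    G.reachIn (c.edgeSet \ {c.edge 0}) (G.fst (c.edge 0)) (G.snd (c.edge 0)) := by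
  have around : ∀ k, 1 ≤ k → k ≤ c.n →
      G.reachIn (c.edgeSet \ {c.edge 0}) (c.vert (1 % c.n)) (c.vert (k % c.n)) := by
    intro k hk1 hkn
    induction k, hk1 using Nat.le_induction with
    | base => exact .refl
    | succ k hk1 ih =>
      have hk : k < c.n := hkn
      refine (ih hk.le).tail ⟨c.edge k, ⟨⟨k, hk, rfl⟩, fun h => ?_⟩, ?_⟩
      · have := c.edge_inj k hk 0 c.n_pos h
        omega
      · rw [Nat.mod_eq_of_lt hk]
        rcases c.ends k hk with h | h
        · exact Or.inl h
        · exact Or.inr h.symm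
  have := around c.n c.n_pos le_rfl
  rw [Nat.mod_self] at this
  rcases c.ends 0 c.n_pos with ⟨h1, h2⟩ | ⟨h1, h2⟩
  · rw [h1, h2, Nat.zero_add]; exact reachIn_symm this
  · rw [h1, h2, Nat.zero_add]; exact this

end Circuit

theorem reachIn_diff_edge_zero_of_subset {T : Set E} (c : Circuit G) (hc : c.edgeSet ⊆ T)
    {u v : V} (h : G.reachIn T u v) : G.reachIn (T \ {c.edge 0}) u v := by
  have detour := reachIn_mono (Set.sdiff_subset_sdiff_left hc) c.reachIn_diff_edge_zero
  refine Relation.reflTransGen_closed (fun a b ⟨e, heT, hends⟩ => ?_) _ _ h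
  by_cases he : e = c.edge 0
  · subst he
    rcases hends with ⟨rfl, rfl⟩ | ⟨rfl, rfl⟩
    · exact detour
    · exact reachIn_symm detour
  · exact .single ⟨e, ⟨heT, he⟩, hends⟩

theorem exists_acyclic_connecting [Fintype E] {A B : Set E}
    (h : ∀ u v, G.reachIn (A ∪ B) u v) :
    ∃ J : Finset E, ↑J ⊆ B ∧ G.Acyclic ↑J ∧ ∀ u v, G.reachIn (A ∪ ↑J) u v := by
  let Connecting : Finset E → Prop := fun J => ↑J ⊆ B ∧ ∀ u v, G.reachIn (A ∪ ↑J) u v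
  obtain ⟨J, hJ, hmin⟩ := Finset.exists_min_image ({J | Connecting J} : Finset (Finset E))
    Finset.card ⟨Finset.univ.filter (· ∈ B), by simpa [Connecting] using h⟩
  simp only [Finset.mem_filter, Finset.mem_univ, true_and] at hJ hmin
  refine ⟨J, hJ.1, fun c hc => ?_, hJ.2⟩
  have he₀ : c.edge 0 ∈ J := hc c.edge_zero_mem
  have hsmaller : Connecting (J.erase (c.edge 0)) := by
    refine ⟨fun e he => hJ.1 (Finset.mem_of_mem_erase he), fun u v => ?_⟩
    refine reachIn_mono ?_
      (reachIn_diff_edge_zero_of_subset c (hc.trans Set.subset_union_right) (hJ.2 u v))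
    intro e ⟨heAJ, he⟩
    rcases heAJ with heA | heJ
    · exact Or.inl heA
    · exact Or.inr (Finset.mem_erase.mpr ⟨he, heJ⟩)
  have := hmin _ hsmaller
  rw [Finset.card_erase_of_mem he₀] at this
  have := Finset.card_pos.mpr ⟨_, he₀⟩
  omega

theorem compEdges_eq_of_mem {A : Set E} {v : V} {e : E} (he : e ∈ G.compEdges A v) :
    G.compEdges A (G.fst e) = G.compEdges A v := by
  ext x
  exact and_congr_right fun _ => ⟨he.2.trans, (reachIn_symm he.2).trans⟩

theorem mem_compEdges_self {A : Set E} {e : E} (he : e ∈ A) : e ∈ G.compEdges A (G.fst e) :=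
  ⟨he, .refl⟩

theorem negEdgeCount_eq_card [Fintype E] (S : Set E) :
    G.negEdgeCount S = #{e | e ∈ S ∧ G.sign e = -1} := by
  rw [negEdgeCount, ← Set.ncard_coe_finset]
  congr 1
  ext e
  simp

theorem even_negEdgeCount [Fintype E] {A : Set E} (h : Even (G.oddCompCount A)) :
    Even (G.negEdgeCount A) := by
  let comp : E → Set E := fun e => G.compEdges A (G.fst e)
  let C : Finset (Set E) := Finset.image comp {e | e ∈ A}
  have mem_comp : ∀ {S e}, S ∈ C → (e ∈ S ↔ e ∈ A ∧ comp e = S) := by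
    intro S e hS
    obtain ⟨e₀, -, rfl⟩ := Finset.mem_image.mp hS
    exact ⟨fun he => ⟨he.1, compEdges_eq_of_mem he⟩, fun ⟨he, hce⟩ => hce ▸ mem_compEdges_self he⟩
  have hsum : G.negEdgeCount A = ∑ S ∈ C, G.negEdgeCount S := by
    rw [negEdgeCount_eq_card, Finset.card_eq_sum_card_fiberwise (f := comp) (t := C)]
    · refine Finset.sum_congr rfl fun S hS => ?_
      rw [negEdgeCount_eq_card, Finset.filter_filter]
      congr 1
      ext e
      simp only [Finset.mem_filter, Finset.mem_univ, true_and, mem_comp hS]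
      tauto
    · intro e he
      exact Finset.mem_image_of_mem comp (by simpa using (Finset.mem_filter.mp he).2.1)
  have hodd : G.oddCompCount A = #{S ∈ C | Odd (G.negEdgeCount S)} := by
    rw [oddCompCount, ← Set.ncard_coe_finset]
    congr 1
    ext S
    simp only [Finset.coe_filter, Set.mem_ofPred_eq]
    constructor
    · rintro ⟨⟨v, rfl⟩, ⟨e, he⟩, hS⟩
      exact ⟨Finset.mem_image.mpr ⟨e, by simpa using he.1, compEdges_eq_of_mem he⟩, hS⟩
    · rintro ⟨hS, hodd⟩
      obtain ⟨e, he, rfl⟩ := Finset.mem_image.mp hS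
      exact ⟨⟨_, rfl⟩, ⟨e, mem_compEdges_self (by simpa using he)⟩, hodd⟩
  rwa [hsum, Finset.even_sum_iff_even_card_odd, ← hodd]

theorem IsOrientation.mul_self {τ : E × Bool → ℤ} (hτ : G.IsOrientation τ) (h : E × Bool) :
    τ h * τ h = 1 := by
  rcases hτ.1 h with h | h <;> rw [h] <;> norm_num

theorem boundary_eq_sum [Fintype E] (τ : E × Bool → ℤ) (f : E → ℤ) (v : V) :
    G.boundary τ f v = ∑ h : E × Bool, if G.ep h = v then τ h * f h.1 else 0 := by
  rw [boundary, ← Finset.coe_filter_univ, finsum_mem_coe_finset, Finset.sum_filter]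

@[simp]
theorem boundary_zero [Fintype E] (τ : E × Bool → ℤ) (v : V) : G.boundary τ 0 v = 0 := by
  simp [boundary_eq_sum]

theorem boundary_add_single [Fintype E] (τ : E × Bool → ℤ) (f : E → ℤ)
    (e : E) (c : ℤ) (v : V) :
    G.boundary τ (f + Pi.single e c) v =
      G.boundary τ f v + ∑ b : Bool, if G.ep (e, b) = v then τ (e, b) * c else 0 := by
  simp only [boundary_eq_sum, Pi.add_apply, mul_add, ite_add_zero, Finset.sum_add_distrib,
    add_right_inj, Fintype.sum_prod_type]
  rw [Finset.sum_eq_single e (fun e' _ he' => by simp [he']) (by simp)]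
  simp

theorem ep_eq_or_ep_not_eq_iff {e : E} {v : V} (b : Bool) :
    G.ep (e, b) = v ∨ G.ep (e, !b) = v ↔ G.fst e = v ∨ G.snd e = v := by
  cases b <;> simp [ep, or_comm]

theorem ite_fst_add_ite_snd_eq {e : E} {v : V} (b : Bool) :
    ((if G.fst e = v then 1 else 0) + if G.snd e = v then 1 else 0) =
      (if G.ep (e, b) = v then 1 else 0) + if G.ep (e, !b) = v then 1 else 0 := by
  cases b <;> simp [ep, add_comm]

variable (G) in
noncomputable def multisetDegree (M : Multiset E) (v : V) : ℕ :=
  M.countP (G.fst · = v) + M.countP (G.snd · = v)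

@[simp]
theorem multisetDegree_zero (v : V) : G.multisetDegree 0 v = 0 := by
  simp [multisetDegree]

theorem multisetDegree_add (M N : Multiset E) (v : V) :
    G.multisetDegree (M + N) v = G.multisetDegree M v + G.multisetDegree N v := by
  simp only [multisetDegree, Multiset.countP_add]
  ring

theorem multisetDegree_cons (e : E) (M : Multiset E) (v : V) :
    G.multisetDegree (e ::ₘ M) v =
      G.multisetDegree M v + ((if G.fst e = v then 1 else 0) + if G.snd e = v then 1 else 0) := by
  simp only [multisetDegree, Multiset.countP_cons]
  ring

theorem multisetDegree_eq_zero_iff {M : Multiset E} {v : V} :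
    G.multisetDegree M v = 0 ↔ v ∉ G.vertsIn {e | e ∈ M} := by
  simp [multisetDegree, vertsIn, Multiset.countP_eq_zero, not_or, imp_and, forall_and]

variable (G) in
/-- Some walk from `a` to `b` uses every edge `e` exactly `M.count e` times; `cons e b` steps
along `e` from its half edge `(e, b)` to `(e, !b)`. -/
inductive Traversal : V → V → Multiset E → Prop
  | nil (v : V) : Traversal v v 0
  | cons (e : E) (b : Bool) {c : V} {M : Multiset E} :
      Traversal (G.ep (e, !b)) c M → Traversal (G.ep (e, b)) c (e ::ₘ M)

namespace Traversal

theorem append {a b c : V} {M N : Multiset E} (h₁ : G.Traversal a b M)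
    (h₂ : G.Traversal b c N) : G.Traversal a c (M + N) := by
  induction h₁ with
  | nil => simpa using h₂
  | cons e b _ ih => rw [Multiset.cons_add]; exact cons e b (ih h₂)

theorem splice {a c v : V} {M P : Multiset E} (h : G.Traversal a c M)
    (hP : G.Traversal v v P) (hv : v = a ∨ v ∈ G.vertsIn {e | e ∈ M}) :
    G.Traversal a c (M + P) := by
  induction h with
  | nil =>
    rcases hv with rfl | ⟨e, he, -⟩
    · simpa using hP
    · simp at he
  | @cons e b c M h ih =>
    have at_start : v = G.ep (e, b) → G.Traversal (G.ep (e, b)) c (e ::ₘ M + P) := by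
      rintro rfl
      rw [add_comm]
      exact hP.append (cons e b h)
    rcases hv with hv | ⟨e', he', hends⟩
    · exact at_start hv
    rw [Multiset.cons_add]
    rcases Multiset.mem_cons.mp he' with rfl | he'
    · rcases (ep_eq_or_ep_not_eq_iff b).mpr hends with hv | hv
      · rw [← Multiset.cons_add]; exact at_start hv.symm
      · exact cons e' b (ih (Or.inl hv.symm))
    · exact cons e b (ih (Or.inr ⟨e', he', hends⟩))

theorem even_multisetDegree_add {a b : V} {M : Multiset E} (h : G.Traversal a b M) (v : V) :
    Even (G.multisetDegree M v + ((if a = v then 1 else 0) + if b = v then 1 else 0)) := by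
  induction h with
  | nil => simp
  | cons e b _ ih =>
    rw [multisetDegree_cons, ite_fst_add_ite_snd_eq b]
    exact (congrArg Even (by ring)).mp (ih.add (even_two_mul (if G.ep (e, b) = v then 1 else 0)))

theorem even_multisetDegree {v : V} {M : Multiset E} (h : G.Traversal v v M) (u : V) :
    Even (G.multisetDegree M u) := by
  by_cases hvu : v = u <;> simpa [hvu, ← two_mul, Nat.even_add] using h.even_multisetDegree_add u

end Traversal

variable (G) in
theorem exists_traversal_stuck (M : Multiset E) (a : V) :
    ∃ M₁ ≤ M, ∃ c, G.Traversal a c M₁ ∧ c ∉ G.vertsIn {e | e ∈ M - M₁} := by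
  induction M using Multiset.strongInductionOn generalizing a with
  | ih M ih =>
    by_cases ha : a ∈ G.vertsIn {e | e ∈ M}
    · obtain ⟨e, he, hends⟩ := ha
      obtain ⟨b, rfl⟩ : ∃ b, G.ep (e, b) = a := by
        rcases hends with h | h
        · exact ⟨true, h⟩
        · exact ⟨false, h⟩
      obtain ⟨M₁, hle, c, htr, hc⟩ := ih (M.erase e) (Multiset.erase_lt.mpr he) (G.ep (e, !b))
      refine ⟨e ::ₘ M₁, ?_, c, htr.cons e b, by rwa [Multiset.sub_cons]⟩
      exact (Multiset.cons_le_cons e hle).trans_eq (Multiset.cons_erase he)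
    · exact ⟨0, Multiset.zero_le M, a, .nil a, by simpa using ha⟩

/-- Hierholzer's argument: while edges remain, a stuck walk from a vertex of the current closed
traversal must return to its start (all degrees being even) and can be spliced in. -/
theorem Traversal.extend {w : V} {M N : Multiset E} (hN : G.Traversal w w N)
    (heven : ∀ v, Even (G.multisetDegree M v))
    (hreach : ∀ e ∈ M, G.reachIn {e | e ∈ M + N} w (G.fst e)) :
    G.Traversal w w (N + M) := by
  induction M using Multiset.strongInductionOn generalizing N with
  | ih M ih =>
    rcases M.empty_or_exists_mem with rfl | ⟨e₀, he₀⟩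
    · simpa using hN
    let S : Set V := {v | v = w ∨ v ∈ G.vertsIn {e | e ∈ N}}
    obtain ⟨v, hvS, hvM⟩ : ∃ v ∈ S, v ∈ G.vertsIn {e | e ∈ M} := by
      by_cases h : G.fst e₀ ∈ S
      · exact ⟨_, h, e₀, he₀, Or.inl rfl⟩
      obtain ⟨u, u', ⟨e, he, hends⟩, hu, hu'⟩ :=
        (hreach e₀ he₀).exists_rel_of_mem_of_notMem (S := S) (Or.inl rfl) h
      rcases Multiset.mem_add.mp he with heM | heN
      · exact ⟨u, hu, e, heM, by tauto⟩
      · exact absurd (Or.inr ⟨e, heN, by tauto⟩) hu'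
    obtain ⟨M₁, hle, c, htr, hc⟩ := G.exists_traversal_stuck M v
    have hsplit : ∀ u, G.multisetDegree M u = G.multisetDegree (M - M₁) u + G.multisetDegree M₁ u :=
      fun u => by rw [← multisetDegree_add, tsub_add_cancel_of_le hle]
    obtain rfl : c = v := by
      by_contra hcv
      have := htr.even_multisetDegree_add c
      rw [if_neg (Ne.symm hcv), if_pos rfl, zero_add, Nat.even_add_one] at this
      have hc0 := multisetDegree_eq_zero_iff.mpr hc
      exact this (by simpa [hsplit, hc0] using heven c)
    have hM₁ : M₁ ≠ 0 := by
      rintro rfl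
      exact hc (by simpa using hvM)
    have hlt : M - M₁ < M := by
      refine lt_of_le_of_ne (Multiset.sub_le_self M M₁) fun h => hM₁ ?_
      have := tsub_add_cancel_of_le hle
      rw [h] at this
      exact add_eq_left.mp this
    have hsum : M - M₁ + (N + M₁) = M + N := by
      rw [add_comm N, ← add_assoc, tsub_add_cancel_of_le hle]
    have := ih (M - M₁) hlt (hN.splice htr hvS)
      (fun u => (Nat.even_add.mp (hsplit u ▸ heven u)).mpr (htr.even_multisetDegree u))
      (fun e he => hsum ▸ hreach e (Multiset.mem_of_le (Multiset.sub_le_self M M₁) he))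
    rwa [add_assoc, add_comm M₁, tsub_add_cancel_of_le hle] at this

theorem exists_closed_traversal {w : V} {M : Multiset E}
    (heven : ∀ v, Even (G.multisetDegree M v))
    (hreach : ∀ e ∈ M, G.reachIn {e | e ∈ M} w (G.fst e)) : G.Traversal w w M := by
  simpa using (Traversal.nil w).extend heven (by simpa using hreach)

/-- The value sent along the traversal is multiplied by the sign of each edge passed. -/
theorem Traversal.exists_flow [Fintype E] {τ : E × Bool → ℤ} (hτ : G.IsOrientation τ)
    {a c : V} {M : Multiset E} (h : G.Traversal a c M) (s : ℤ) (hs : s = 1 ∨ s = -1) :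
    ∃ f : E → ℤ, (∀ e, |f e| ≤ M.count e) ∧ (∀ e, Even (f e + M.count e)) ∧
      ∀ v, G.boundary τ f v =
        (if a = v then s else 0) - if c = v then s * (M.map G.sign).prod else 0 := by
  induction h generalizing s with
  | nil => exact ⟨0, by simp, by simp, fun v => by split_ifs <;> simp⟩
  | @cons e b c M _ ih =>
    have hs' : G.sign e * s = 1 ∨ G.sign e * s = -1 := by
      rcases G.sign_unit e with h | h <;> rcases hs with rfl | rfl <;> simp [h]
    obtain ⟨f, hf_le, hf_even, hf_bd⟩ := ih (G.sign e * s) hs'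
    have hstep : s * τ (e, b) = 1 ∨ s * τ (e, b) = -1 := by
      rcases hτ.1 (e, b) with h | h <;> rcases hs with rfl | rfl <;> simp [h]
    refine ⟨f + Pi.single e (s * τ (e, b)), fun e' => ?_, fun e' => ?_, fun v => ?_⟩
    · rw [Multiset.count_cons, Pi.add_apply]
      by_cases he' : e' = e
      · subst he'
        have := abs_le.mp (hf_le e')
        rw [if_pos rfl, Pi.single_eq_same, abs_le]
        push_cast
        constructor <;> rcases hstep with h | h <;> linarith
      · simpa [he'] using hf_le e'
    · rw [Multiset.count_cons, Pi.add_apply]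
      by_cases he' : e' = e
      · subst he'
        obtain ⟨r, hr⟩ := hf_even e'
        rw [if_pos rfl, Pi.single_eq_same]
        push_cast
        rcases hstep with h | h
        · exact ⟨r + 1, by linarith⟩
        · exact ⟨r, by linarith⟩
      · simpa [he'] using hf_even e'
    · have h₁ : τ (e, b) * (s * τ (e, b)) = s := by
        linear_combination s * hτ.mul_self (e, b)
      have h₂ : τ (e, !b) * (s * τ (e, b)) = -(G.sign e * s) := by
        cases b <;> simp only [Bool.not_true, Bool.not_false] <;> linear_combination s * hτ.2 e
      rw [boundary_add_single, hf_bd v, Fintype.sum_bool, Multiset.map_cons, Multiset.prod_cons]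
      cases b <;> simp only [Bool.not_true, Bool.not_false] at h₁ h₂ ⊢ <;> rw [h₁, h₂] <;>
        split_ifs <;> ring

theorem exists_flow_of_even_multisetDegree [Fintype E] {τ : E × Bool → ℤ}
    (hτ : G.IsOrientation τ) {M : Multiset E} (heven : ∀ v, Even (G.multisetDegree M v))
    (hprod : (M.map G.sign).prod = 1)
    (hconn : ∀ e ∈ M, ∀ e' ∈ M, G.reachIn {e | e ∈ M} (G.fst e) (G.fst e')) :
    ∃ f : E → ℤ, (∀ e, |f e| ≤ M.count e) ∧ (∀ e, Even (f e + M.count e)) ∧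
      ∀ v, G.boundary τ f v = 0 := by
  rcases M.empty_or_exists_mem with rfl | ⟨e₀, he₀⟩
  · exact ⟨0, by simp, by simp, by simp⟩
  obtain ⟨f, hf_le, hf_even, hf_bd⟩ :=
    (exists_closed_traversal heven (hconn e₀ he₀)).exists_flow hτ 1 (Or.inl rfl)
  exact ⟨f, hf_le, hf_even, fun v => by simp [hf_bd, hprod]⟩

theorem IsZFlow.even_multisetDegree_supp [Fintype E] {τ : E × Bool → ℤ} {f : E → ℤ}
    (h : G.IsZFlow 2 τ f) (v : V) : Even (G.multisetDegree ({e | f e ≠ 0} : Finset E).val v) := by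
  have hterm : ∀ h' : E × Bool, ((τ h' * f h'.1 : ℤ) : ZMod 2) = if f h'.1 ≠ 0 then 1 else 0 := by
    intro h'
    have := abs_le.mp (h.2.1 h'.1)
    obtain hf | hf | hf : f h'.1 = -1 ∨ f h'.1 = 0 ∨ f h'.1 = 1 := by omega
    all_goals rcases h.1.1 h' with ht | ht <;> simp [ht, hf]
  have hbd : ((G.boundary τ f v : ℤ) : ZMod 2) = 0 :=
    ZMod.intCast_eq_zero_iff_even.mpr (even_iff_two_dvd.mpr (h.2.2 v))
  rw [boundary_eq_sum, Int.cast_sum] at hbd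
  simp only [apply_ite (Int.cast (R := ZMod 2)), hterm, Int.cast_zero] at hbd
  rw [← ZMod.natCast_eq_zero_iff_even, ← hbd, multisetDegree, Fintype.sum_prod_type]
  simp only [Multiset.countP_eq_card_filter, ← Finset.filter_val, Finset.card_val,
    Finset.filter_filter, Nat.cast_add, Finset.natCast_card_filter, ← Finset.sum_add_distrib]
  refine Finset.sum_congr rfl fun e _ => ?_
  simp only [Fintype.sum_bool, ep]
  split_ifs <;> simp_all

theorem prod_sign_eq_neg_one_pow [Fintype E] (A : Finset E) :
    ∏ e ∈ A, G.sign e = (-1) ^ G.negEdgeCount ↑A := by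
  rw [negEdgeCount_eq_card, Finset.card_filter, ← Finset.prod_pow_eq_pow_sum,
    ← Finset.prod_subset (Finset.subset_univ A) (fun e _ he => by simp [he])]
  refine Finset.prod_congr rfl fun e he => ?_
  rcases G.sign_unit e with h | h <;> simp [h, he]

theorem exists_flow_doubling [Fintype E] {τ : E × Bool → ℤ} (hτ : G.IsOrientation τ)
    {A J : Finset E} (hAJ : Disjoint A J) (hdeg : ∀ v, Even (G.multisetDegree A.val v))
    (hneg : Even (G.negEdgeCount ↑A)) (hspan : ∀ u v, G.reachIn (↑A ∪ ↑J) u v) :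
    ∃ f, G.IsFlow 3 τ f ∧ (∀ e, e ∈ A ↔ |f e| = 1) ∧ ∀ e, f e ≠ 0 → e ∉ A → e ∈ J := by
  let M := A.val + J.val + J.val
  obtain ⟨f, hf_le, hf_even, hf_bd⟩ := exists_flow_of_even_multisetDegree hτ (M := M)
    (fun v => by
      simpa [M, multisetDegree_add, add_assoc, ← two_mul] using (hdeg v).add (even_two_mul _))
    (by simp [M, Finset.prod_map_val, prod_sign_eq_neg_one_pow, hneg.neg_one_pow, ← mul_pow])
    (fun e _ e' _ => by convert hspan (G.fst e) (G.fst e') using 2; ext; simp [M])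
  have hcount : ∀ e, (M.count e : ℤ) = (if e ∈ A then 1 else 0) + 2 * if e ∈ J then 1 else 0 := by
    intro e
    simp only [M, Multiset.count_add, Multiset.count_eq_of_nodup A.nodup,
      Multiset.count_eq_of_nodup J.nodup, Finset.mem_val]
    push_cast
    ring
  have hvalues : ∀ e, (e ∈ A ∧ (f e = 1 ∨ f e = -1)) ∨
      (e ∉ A ∧ e ∈ J ∧ (f e = 0 ∨ f e = 2 ∨ f e = -2)) ∨ (e ∉ A ∧ e ∉ J ∧ f e = 0) := by
    intro e
    have hle := hf_le e
    obtain ⟨r, hr⟩ := hf_even e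
    rw [hcount] at hle hr
    rw [abs_le] at hle
    by_cases heA : e ∈ A
    · have heJ : e ∉ J := Finset.disjoint_left.mp hAJ heA
      rw [if_pos heA, if_neg heJ] at hle hr
      exact Or.inl ⟨heA, by omega⟩
    by_cases heJ : e ∈ J
    · rw [if_neg heA, if_pos heJ] at hle hr
      exact Or.inr (Or.inl ⟨heA, heJ, by omega⟩)
    · rw [if_neg heA, if_neg heJ] at hle hr
      exact Or.inr (Or.inr ⟨heA, heJ, by omega⟩)
  refine ⟨f, ⟨hτ, fun e => ?_, hf_bd⟩, fun e => ?_, fun e hfe heA => ?_⟩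
  all_goals rcases hvalues e with ⟨_, h | h⟩ | ⟨_, _, h | h | h⟩ | ⟨_, _, h⟩ <;> simp_all

end SignedGraph

theorem stmt_8_general {V E : Type} [Fintype E] (G : SignedGraph V E)
    (hconn : G.Connected) (τ₁ : E × Bool → ℤ) (f₁ : E → ℤ) (h₁ : G.IsZFlow 2 τ₁ f₁)
    (heven : Even (G.oddCompCount (G.supp f₁))) :
    ∃ τ₂ f₂, G.IsFlow 3 τ₂ f₂ ∧ G.supp f₁ = {e | |f₂ e| = 1} ∧
      G.Acyclic (G.supp f₂ \ G.supp f₁) := by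
  let A : Finset E := {e | f₁ e ≠ 0}
  have hA : (A : Set E) = G.supp f₁ := by ext; simp [A, SignedGraph.supp]
  obtain ⟨J, hJA, hJ, hspan⟩ := SignedGraph.exists_acyclic_connecting (G := G)
    (A := G.supp f₁) (B := (G.supp f₁)ᶜ) (fun u v => by simpa using hconn u v)
  have hAJ : Disjoint A J :=
    Finset.disjoint_left.mpr fun e heA heJ => hJA heJ (by simpa [A, SignedGraph.supp] using heA)
  obtain ⟨f₂, hflow, hA₂, hJ₂⟩ := SignedGraph.exists_flow_doubling h₁.1 hAJ
    h₁.even_multisetDegree_supp (hA ▸ SignedGraph.even_negEdgeCount heven) (hA ▸ hspan)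
  refine ⟨τ₁, f₂, hflow, ?_, fun c hc => hJ c fun e he => hJ₂ e (hc he).1 ?_⟩
  · ext e
    simp [← hA₂, A, SignedGraph.supp]
  · simpa [A, SignedGraph.supp] using (hc he).2

/-- If a connected signed graph admits a `ℤ₂`-flow `f₁` whose support
has an even number of odd components, then it admits a 3-flow `f₂` with
`supp f₁ = E_{f₂ = ±1}` and `supp f₂ − supp f₁` acyclic. -/
theorem stmt_8 {V E : Type} [Fintype V] [Fintype E] (G : SignedGraph V E)
    (hconn : G.Connected) (τ₁ : E × Bool → ℤ) (f₁ : E → ℤ) (h₁ : G.IsZFlow 2 τ₁ f₁)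
    (heven : Even (G.oddCompCount (G.supp f₁))) :
    ∃ τ₂ f₂, G.IsFlow 3 τ₂ f₂ ∧ G.supp f₁ = {e | |f₂ e| = 1} ∧
      G.Acyclic (G.supp f₂ \ G.supp f₁) :=
  stmt_8_general G hconn τ₁ f₁ h₁ heven
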